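/- Let H be an N×m real matrix with full row rank, s⋄ ∈ R^m arbitrary, n ∈ R^N, and y = Hs⋄ + n. Let s_r⋄ = T_r(s⋄) be a best r-term ℓ₂ approximation of s⋄. Suppose ρ_{2r,min}(H) > 1/2 and let s* be any limit of the ECME iteration s^{(p+1)} = T_r(s^{(p)} + H^T(HH^T)^{-1}(y - Hs^{(p)})). Then ‖s* - s_r⋄‖₂ ≤ 2(‖s⋄ - s_r⋄‖₂ + ‖H^T(HH^T)^{-1}n‖₂) / (√ρ_{2r,min}(H) - √(1 - ρ_{2r,min}(H))). -/

import Mathlib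

open Matrix Set

/-- Number of nonzero entries (ℓ₀ "norm"). -/
noncomputable def l0 {m : ℕ} (s : Fin m → ℝ) : ℕ := {j | s j ≠ 0}.ncard

/-- The r-sparse subspace quotient ρ_r(s, H). -/
noncomputable def ssq {N m : ℕ} (H : Matrix (Fin N) (Fin m) ℝ) (s : Fin m → ℝ) : ℝ :=
  (s ⬝ᵥ ((Hᵀ * (H * Hᵀ)⁻¹ * H) *ᵥ s)) / (s ⬝ᵥ s)

/-- The minimum r-sparse subspace quotient ρ_{r,min}(H). -/
noncomputable def minSSQ {N m : ℕ} (H : Matrix (Fin N) (Fin m) ℝ) (r : ℕ) : ℝ :=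
  sInf {x | ∃ s : Fin m → ℝ, s ≠ 0 ∧ l0 s ≤ r ∧ x = ssq H s}

/-- Euclidean (ℓ₂) norm of a vector in R^m. -/
noncomputable def l2enorm {k : ℕ} (s : Fin k → ℝ) : ℝ := Real.sqrt (∑ j, s j ^ 2)

/-!
Let `P = Hᵀ (H Hᵀ)⁻¹ H` be the orthogonal projection onto the row space of `H`,
`ρ = ρ_{2r,min}(H)` and `B = ‖s⋄ - s_r⋄‖ + ‖Hᵀ (H Hᵀ)⁻¹ n‖`. Before thresholding, the ECME
update `u` of an iterate `s` satisfies
`u - s_r⋄ = (I - P)(s - s_r⋄) + P (s⋄ - s_r⋄ + Hᵀ (H Hᵀ)⁻¹ n)`.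
The next iterate `s'` is at least as close to `u` as the `r`-sparse `s_r⋄`, so `v = s' - s_r⋄`
satisfies `‖v‖² ≤ 2 ⟪u - s_r⋄, v⟫`. As `s - s_r⋄` and `v` are `2r`-sparse,
`‖(I - P) x‖² ≤ (1 - ρ) ‖x‖²` for both, whence `‖v‖ ≤ 2 (1 - ρ) ‖s - s_r⋄‖ + 2 B`. In the limit
`(2ρ - 1) ‖s* - s_r⋄‖ ≤ 2 B`, and `√ρ - √(1 - ρ) ≤ 2ρ - 1`.
-/

open Filter Topology

lemma isUnit_det_mul_transpose_of_rank_eq {ι κ : Type*} [Fintype ι] [DecidableEq ι] [Fintype κ]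
    (H : Matrix ι κ ℝ) (hrank : H.rank = Fintype.card ι) : IsUnit (H * Hᵀ).det := by
  rw [← isUnit_iff_isUnit_det, ← mulVec_surjective_iff_isUnit, ← coe_mulVecLin,
    ← LinearMap.range_eq_top]
  apply Submodule.eq_top_of_finrank_eq
  rw [← Matrix.rank, rank_self_mul_transpose, hrank, Module.finrank_fintype_fun_eq_card]

lemma dotProduct_self_nonneg {κ : Type*} [Fintype κ] (a : κ → ℝ) : 0 ≤ a ⬝ᵥ a :=
  Finset.sum_nonneg fun _ _ => mul_self_nonneg _

section RowSpaceProjection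

variable {ι κ : Type*} [Fintype ι] [DecidableEq ι] [Fintype κ] (H : Matrix ι κ ℝ)

/-- `ssq H s` is the Rayleigh quotient of this matrix at `s`. -/
noncomputable def rowSpaceProj : Matrix κ κ ℝ := Hᵀ * (H * Hᵀ)⁻¹ * H

lemma transpose_rowSpaceProj : (rowSpaceProj H)ᵀ = rowSpaceProj H := by
  rw [rowSpaceProj, transpose_mul, transpose_mul, transpose_transpose, transpose_nonsing_inv,
    transpose_mul, transpose_transpose, Matrix.mul_assoc]

lemma dotProduct_rowSpaceProj_comm (a b : κ → ℝ) :
    (rowSpaceProj H *ᵥ a) ⬝ᵥ b = a ⬝ᵥ (rowSpaceProj H *ᵥ b) := by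
  rw [dotProduct_mulVec, ← mulVec_transpose, transpose_rowSpaceProj]

variable {H} (hdet : IsUnit (H * Hᵀ).det)
include hdet

lemma rowSpaceProj_mul_pinv : rowSpaceProj H * (Hᵀ * (H * Hᵀ)⁻¹) = Hᵀ * (H * Hᵀ)⁻¹ := by
  rw [rowSpaceProj, Matrix.mul_assoc, Matrix.mul_assoc, ← Matrix.mul_assoc H,
    mul_nonsing_inv _ hdet, Matrix.mul_one]

lemma rowSpaceProj_mul_self : rowSpaceProj H * rowSpaceProj H = rowSpaceProj H := by
  calc rowSpaceProj H * rowSpaceProj H = rowSpaceProj H * (Hᵀ * (H * Hᵀ)⁻¹) * H := by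
        simp only [rowSpaceProj, Matrix.mul_assoc]
    _ = rowSpaceProj H := by rw [rowSpaceProj_mul_pinv hdet]; rfl

lemma rowSpaceProj_mulVec_pinv (n : ι → ℝ) :
    rowSpaceProj H *ᵥ (Hᵀ *ᵥ ((H * Hᵀ)⁻¹ *ᵥ n)) = Hᵀ *ᵥ ((H * Hᵀ)⁻¹ *ᵥ n) := by
  simp only [mulVec_mulVec]
  rw [rowSpaceProj_mul_pinv hdet]

lemma sub_rowSpaceProj_dotProduct_rowSpaceProj (a b : κ → ℝ) :
    (a - rowSpaceProj H *ᵥ a) ⬝ᵥ (rowSpaceProj H *ᵥ b) = 0 := by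
  rw [sub_dotProduct, dotProduct_rowSpaceProj_comm, mulVec_mulVec, rowSpaceProj_mul_self hdet,
    sub_self]

lemma rowSpaceProj_dotProduct_self (v : κ → ℝ) :
    (rowSpaceProj H *ᵥ v) ⬝ᵥ (rowSpaceProj H *ᵥ v) = v ⬝ᵥ (rowSpaceProj H *ᵥ v) := by
  rw [dotProduct_rowSpaceProj_comm, mulVec_mulVec, rowSpaceProj_mul_self hdet]

lemma sub_rowSpaceProj_dotProduct_self (v : κ → ℝ) :
    (v - rowSpaceProj H *ᵥ v) ⬝ᵥ (v - rowSpaceProj H *ᵥ v) =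
      v ⬝ᵥ v - v ⬝ᵥ (rowSpaceProj H *ᵥ v) := by
  rw [dotProduct_sub, sub_rowSpaceProj_dotProduct_rowSpaceProj hdet, sub_zero, sub_dotProduct,
    dotProduct_rowSpaceProj_comm]

lemma dotProduct_rowSpaceProj_nonneg (v : κ → ℝ) : 0 ≤ v ⬝ᵥ (rowSpaceProj H *ᵥ v) := by
  rw [← rowSpaceProj_dotProduct_self hdet]
  exact dotProduct_self_nonneg _

lemma dotProduct_rowSpaceProj_le (v : κ → ℝ) : v ⬝ᵥ (rowSpaceProj H *ᵥ v) ≤ v ⬝ᵥ v := by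
  linarith [sub_rowSpaceProj_dotProduct_self hdet v,
    dotProduct_self_nonneg (v - rowSpaceProj H *ᵥ v)]

end RowSpaceProjection

section EuclideanNorm

variable {k : ℕ}

lemma l2enorm_eq_norm (a : Fin k → ℝ) : l2enorm a = ‖WithLp.toLp 2 a‖ := by
  simp [l2enorm, EuclideanSpace.norm_eq]

lemma l2enorm_nonneg (a : Fin k → ℝ) : 0 ≤ l2enorm a := Real.sqrt_nonneg _

lemma l2enorm_eq_sqrt_dotProduct (a : Fin k → ℝ) : l2enorm a = √(a ⬝ᵥ a) := by
  simp only [l2enorm, dotProduct, sq]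

lemma l2enorm_sq (a : Fin k → ℝ) : l2enorm a ^ 2 = a ⬝ᵥ a := by
  rw [l2enorm_eq_sqrt_dotProduct, Real.sq_sqrt (dotProduct_self_nonneg a)]

lemma dotProduct_le_l2enorm_mul (a b : Fin k → ℝ) : a ⬝ᵥ b ≤ l2enorm a * l2enorm b :=
  Real.sum_mul_le_sqrt_mul_sqrt _ a b

lemma l2enorm_add_le (a b : Fin k → ℝ) : l2enorm (a + b) ≤ l2enorm a + l2enorm b := by
  simpa only [l2enorm_eq_norm, WithLp.toLp_add] using norm_add_le _ _

lemma continuous_l2enorm : Continuous (l2enorm : (Fin k → ℝ) → ℝ) :=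
  (continuous_norm.comp (PiLp.continuous_toLp 2 _)).congr fun a => (l2enorm_eq_norm a).symm

lemma l2enorm_sq_le_two_mul_dotProduct {u t t' : Fin k → ℝ}
    (h : l2enorm (u - t') ≤ l2enorm (u - t)) :
    (t' - t) ⬝ᵥ (t' - t) ≤ 2 * ((u - t) ⬝ᵥ (t' - t)) := by
  have hsq := pow_le_pow_left₀ (l2enorm_nonneg _) h 2
  rw [l2enorm_sq, l2enorm_sq, show u - t' = (u - t) - (t' - t) by abel] at hsq
  generalize u - t = a, t' - t = b at hsq ⊢
  rw [sub_dotProduct, dotProduct_sub, dotProduct_sub, dotProduct_comm b a] at hsq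
  linarith

end EuclideanNorm

lemma l0_sub_le {m : ℕ} (a b : Fin m → ℝ) : l0 (a - b) ≤ l0 a + l0 b :=
  (Set.ncard_le_ncard (Function.support_sub a b) (Set.toFinite _)).trans (Set.ncard_union_le _ _)

section SparseSubspaceQuotient

variable {N m : ℕ} {H : Matrix (Fin N) (Fin m) ℝ} (hdet : IsUnit (H * Hᵀ).det)
include hdet

lemma ssq_nonneg (s : Fin m → ℝ) : 0 ≤ ssq H s :=
  div_nonneg (dotProduct_rowSpaceProj_nonneg hdet s) (dotProduct_self_nonneg _)

lemma ssq_le_one (s : Fin m → ℝ) : ssq H s ≤ 1 :=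
  div_le_one_of_le₀ (dotProduct_rowSpaceProj_le hdet s) (dotProduct_self_nonneg _)

lemma minSSQ_le_ssq {k : ℕ} {s : Fin m → ℝ} (hs0 : s ≠ 0) (hs : l0 s ≤ k) :
    minSSQ H k ≤ ssq H s :=
  csInf_le ⟨0, by rintro _ ⟨v, -, -, rfl⟩; exact ssq_nonneg hdet v⟩ ⟨s, hs0, hs, rfl⟩

lemma minSSQ_le_one {k : ℕ} (hpos : 0 < minSSQ H k) : minSSQ H k ≤ 1 := by
  rcases Set.eq_empty_or_nonempty {x | ∃ s : Fin m → ℝ, s ≠ 0 ∧ l0 s ≤ k ∧ x = ssq H s}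
    with hempty | ⟨_, v, hv0, hv, rfl⟩
  · rw [minSSQ, hempty, Real.sInf_empty] at hpos
    exact absurd hpos (lt_irrefl 0)
  · exact (minSSQ_le_ssq hdet hv0 hv).trans (ssq_le_one hdet v)

lemma minSSQ_mul_dotProduct_le {k : ℕ} {v : Fin m → ℝ} (hv : l0 v ≤ k) :
    minSSQ H k * (v ⬝ᵥ v) ≤ v ⬝ᵥ (rowSpaceProj H *ᵥ v) := by
  rcases eq_or_ne v 0 with rfl | hv0
  · simp
  have hpos : 0 < v ⬝ᵥ v :=
    (dotProduct_self_nonneg _).lt_of_ne' (dotProduct_self_eq_zero.not.2 hv0)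
  calc minSSQ H k * (v ⬝ᵥ v) ≤ ssq H v * (v ⬝ᵥ v) :=
        mul_le_mul_of_nonneg_right (minSSQ_le_ssq hdet hv0 hv) hpos.le
    _ = v ⬝ᵥ (rowSpaceProj H *ᵥ v) := div_mul_cancel₀ _ hpos.ne'

lemma l2enorm_sub_rowSpaceProj_le {k : ℕ} {v : Fin m → ℝ} (hv : l0 v ≤ k) :
    l2enorm (v - rowSpaceProj H *ᵥ v) ≤ √(1 - minSSQ H k) * l2enorm v := by
  rw [l2enorm_eq_sqrt_dotProduct, l2enorm_eq_sqrt_dotProduct,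
    ← Real.sqrt_mul' _ (dotProduct_self_nonneg v), sub_rowSpaceProj_dotProduct_self hdet]
  gcongr
  linarith [minSSQ_mul_dotProduct_le hdet hv]

lemma dotProduct_sub_rowSpaceProj_le {k : ℕ} (hρ : minSSQ H k ≤ 1) {a b : Fin m → ℝ}
    (ha : l0 a ≤ k) (hb : l0 b ≤ k) :
    (a - rowSpaceProj H *ᵥ a) ⬝ᵥ (b - rowSpaceProj H *ᵥ b) ≤
      (1 - minSSQ H k) * (l2enorm a * l2enorm b) :=
  calc _ ≤ l2enorm (a - rowSpaceProj H *ᵥ a) * l2enorm (b - rowSpaceProj H *ᵥ b) :=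
        dotProduct_le_l2enorm_mul _ _
    _ ≤ (√(1 - minSSQ H k) * l2enorm a) * (√(1 - minSSQ H k) * l2enorm b) :=
        mul_le_mul (l2enorm_sub_rowSpaceProj_le hdet ha) (l2enorm_sub_rowSpaceProj_le hdet hb)
          (l2enorm_nonneg _) (mul_nonneg (Real.sqrt_nonneg _) (l2enorm_nonneg _))
    _ = (1 - minSSQ H k) * (l2enorm a * l2enorm b) := by
        rw [mul_mul_mul_comm, Real.mul_self_sqrt (sub_nonneg.2 hρ)]

lemma l2enorm_rowSpaceProj_le (v : Fin m → ℝ) : l2enorm (rowSpaceProj H *ᵥ v) ≤ l2enorm v := by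
  rw [l2enorm_eq_sqrt_dotProduct, l2enorm_eq_sqrt_dotProduct, rowSpaceProj_dotProduct_self hdet]
  exact Real.sqrt_le_sqrt (dotProduct_rowSpaceProj_le hdet v)

end SparseSubspaceQuotient

/-- The ECME step before hard thresholding: `s^{(p+1)} = T_r (ecmeUpdate H y s^{(p)})`. -/
noncomputable def ecmeUpdate {N m : ℕ} (H : Matrix (Fin N) (Fin m) ℝ) (y : Fin N → ℝ)
    (s : Fin m → ℝ) : Fin m → ℝ :=
  s + Hᵀ *ᵥ ((H * Hᵀ)⁻¹ *ᵥ (y - H *ᵥ s))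

section ECMEStep

variable {N m : ℕ} {H : Matrix (Fin N) (Fin m) ℝ} (hdet : IsUnit (H * Hᵀ).det)
include hdet

lemma ecmeUpdate_sub_eq (sd s srd : Fin m → ℝ) (n : Fin N → ℝ) :
    ecmeUpdate H (H *ᵥ sd + n) s - srd =
      (s - srd - rowSpaceProj H *ᵥ (s - srd)) +
        rowSpaceProj H *ᵥ (sd - srd + Hᵀ *ᵥ ((H * Hᵀ)⁻¹ *ᵥ n)) := by
  rw [mulVec_add, rowSpaceProj_mulVec_pinv hdet, ecmeUpdate]
  simp only [mulVec_add, mulVec_sub, mulVec_mulVec, rowSpaceProj, Matrix.mul_assoc]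
  abel

lemma ecmeUpdate_sub_dotProduct (sd s srd v : Fin m → ℝ) (n : Fin N → ℝ) :
    (ecmeUpdate H (H *ᵥ sd + n) s - srd) ⬝ᵥ v =
      (s - srd - rowSpaceProj H *ᵥ (s - srd)) ⬝ᵥ (v - rowSpaceProj H *ᵥ v) +
        (sd - srd + Hᵀ *ᵥ ((H * Hᵀ)⁻¹ *ᵥ n)) ⬝ᵥ (rowSpaceProj H *ᵥ v) := by
  rw [ecmeUpdate_sub_eq hdet, add_dotProduct, dotProduct_rowSpaceProj_comm, dotProduct_sub,
    sub_rowSpaceProj_dotProduct_rowSpaceProj hdet, sub_zero]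

theorem l2enorm_sub_le_of_ecme_step {r : ℕ} (hρ : minSSQ H (2 * r) ≤ 1)
    {sd s s' srd : Fin m → ℝ} {n : Fin N → ℝ} (hs : l0 s ≤ r) (hs' : l0 s' ≤ r)
    (hsrd : l0 srd ≤ r)
    (hbest : l2enorm (ecmeUpdate H (H *ᵥ sd + n) s - s') ≤
      l2enorm (ecmeUpdate H (H *ᵥ sd + n) s - srd)) :
    l2enorm (s' - srd) ≤ 2 * (1 - minSSQ H (2 * r)) * l2enorm (s - srd) +
      2 * (l2enorm (sd - srd) + l2enorm (Hᵀ *ᵥ ((H * Hᵀ)⁻¹ *ᵥ n))) := by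
  set e := s - srd
  set v := s' - srd
  set B := l2enorm (sd - srd) + l2enorm (Hᵀ *ᵥ ((H * Hᵀ)⁻¹ *ᵥ n))
  have he : l0 e ≤ 2 * r := by linarith [l0_sub_le s srd]
  have hv : l0 v ≤ 2 * r := by linarith [l0_sub_le s' srd]
  have hB : 0 ≤ B := add_nonneg (l2enorm_nonneg _) (l2enorm_nonneg _)
  have hnoise :
      (sd - srd + Hᵀ *ᵥ ((H * Hᵀ)⁻¹ *ᵥ n)) ⬝ᵥ (rowSpaceProj H *ᵥ v) ≤ B * l2enorm v :=
    (dotProduct_le_l2enorm_mul _ _).trans <|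
      mul_le_mul (l2enorm_add_le _ _) (l2enorm_rowSpaceProj_le hdet v) (l2enorm_nonneg _) hB
  have hsq : l2enorm v * l2enorm v ≤
      (2 * (1 - minSSQ H (2 * r)) * l2enorm e + 2 * B) * l2enorm v := by
    rw [← sq, l2enorm_sq]
    linarith [l2enorm_sq_le_two_mul_dotProduct hbest,
      ecmeUpdate_sub_dotProduct hdet sd s srd v n, dotProduct_sub_rowSpaceProj_le hdet hρ he hv]
  rcases (l2enorm_nonneg v).eq_or_lt with hv0 | hv0
  · rw [← hv0]
    exact add_nonneg (mul_nonneg (by linarith) (l2enorm_nonneg e)) (mul_nonneg two_pos.le hB)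
  · exact le_of_mul_le_mul_right hsq hv0

end ECMEStep

lemma le_div_one_sub_of_tendsto {x : ℕ → ℝ} {L a b : ℝ} (ha : a < 1)
    (hx : Tendsto x atTop (𝓝 L)) (hrec : ∀ p, x (p + 1) ≤ a * x p + b) : L ≤ b / (1 - a) := by
  have hL : L ≤ a * L + b :=
    le_of_tendsto_of_tendsto' (hx.comp (tendsto_add_atTop_nat 1)) ((hx.const_mul a).add_const b)
      hrec
  rw [le_div_iff₀ (sub_pos.2 ha)]
  linarith

lemma sqrt_sub_sqrt_one_sub_le {ρ : ℝ} (hρ : 1 / 2 ≤ ρ) (hρ1 : ρ ≤ 1) :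
    √ρ - √(1 - ρ) ≤ 2 * ρ - 1 := by
  have ha := Real.sq_sqrt (show 0 ≤ ρ by linarith)
  have hb := Real.sq_sqrt (sub_nonneg.2 hρ1)
  have hba : √(1 - ρ) ≤ √ρ := Real.sqrt_le_sqrt (by linarith)
  -- `2ρ - 1 = (√ρ - √(1 - ρ)) (√ρ + √(1 - ρ))` and `(√ρ + √(1 - ρ))² ≥ 1`
  nlinarith [Real.sqrt_nonneg ρ, Real.sqrt_nonneg (1 - ρ),
    mul_nonneg (Real.sqrt_nonneg ρ) (Real.sqrt_nonneg (1 - ρ))]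

theorem ecme_near_optimal_recovery_general {N m : ℕ} (H : Matrix (Fin N) (Fin m) ℝ)
    (hrank : H.rank = N) (r : ℕ)
    (sd : Fin m → ℝ) (n : Fin N → ℝ) (y : Fin N → ℝ) (hy : y = H *ᵥ sd + n)
    (srd : Fin m → ℝ) (hsrd : l0 srd ≤ r)
    (hssq : 1 / 2 < minSSQ H (2 * r))
    (s : ℕ → Fin m → ℝ) (hs : ∀ p : ℕ, l0 (s p) ≤ r)
    (hstep : ∀ p : ℕ, ∀ t : Fin m → ℝ, l0 t ≤ r →
      l2enorm (s p + Hᵀ *ᵥ ((H * Hᵀ)⁻¹ *ᵥ (y - H *ᵥ s p)) - s (p + 1)) ≤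
      l2enorm (s p + Hᵀ *ᵥ ((H * Hᵀ)⁻¹ *ᵥ (y - H *ᵥ s p)) - t))
    (sstar : Fin m → ℝ) (hlim : Filter.Tendsto s Filter.atTop (nhds sstar)) :
    l2enorm (sstar - srd) ≤
      2 * (l2enorm (sd - srd) + l2enorm (Hᵀ *ᵥ ((H * Hᵀ)⁻¹ *ᵥ n))) /
        (Real.sqrt (minSSQ H (2 * r)) - Real.sqrt (1 - minSSQ H (2 * r))) := by
  subst hy
  have hdet : IsUnit (H * Hᵀ).det :=
    isUnit_det_mul_transpose_of_rank_eq H (by rw [hrank, Fintype.card_fin])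
  set ρ := minSSQ H (2 * r)
  set B := l2enorm (sd - srd) + l2enorm (Hᵀ *ᵥ ((H * Hᵀ)⁻¹ *ᵥ n))
  have hρ1 : ρ ≤ 1 := minSSQ_le_one hdet (by linarith)
  have hrec : ∀ p, l2enorm (s (p + 1) - srd) ≤ 2 * (1 - ρ) * l2enorm (s p - srd) + 2 * B :=
    fun p => l2enorm_sub_le_of_ecme_step hdet hρ1 (hs p) (hs (p + 1)) hsrd (hstep p srd hsrd)
  have herr : Tendsto (fun p => l2enorm (s p - srd)) atTop (𝓝 (l2enorm (sstar - srd))) :=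
    ((continuous_l2enorm.comp (continuous_sub_right srd)).tendsto sstar).comp hlim
  have hB : 0 ≤ 2 * B :=
    mul_nonneg two_pos.le (add_nonneg (l2enorm_nonneg _) (l2enorm_nonneg _))
  have hgap : 0 < √ρ - √(1 - ρ) :=
    sub_pos.2 (Real.sqrt_lt_sqrt (sub_nonneg.2 hρ1) (by linarith))
  calc l2enorm (sstar - srd) ≤ 2 * B / (1 - 2 * (1 - ρ)) :=
        le_div_one_sub_of_tendsto (by linarith) herr hrec
    _ = 2 * B / (2 * ρ - 1) := by ring_nf
    _ ≤ 2 * B / (√ρ - √(1 - ρ)) :=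
        div_le_div_of_nonneg_left hB hgap (sqrt_sub_sqrt_one_sub_le hssq.le hρ1)

theorem ecme_near_optimal_recovery {N m : ℕ} (H : Matrix (Fin N) (Fin m) ℝ)
    (hNm : N ≤ m) (hrank : H.rank = N) (r : ℕ)
    (sd : Fin m → ℝ) (n : Fin N → ℝ) (y : Fin N → ℝ) (hy : y = H *ᵥ sd + n)
    (srd : Fin m → ℝ) (hsrd : l0 srd ≤ r)
    (hbest : ∀ t : Fin m → ℝ, l0 t ≤ r → l2enorm (srd - sd) ≤ l2enorm (t - sd))
    (hssq : 1 / 2 < minSSQ H (2 * r))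
    (s : ℕ → Fin m → ℝ) (hs : ∀ p : ℕ, l0 (s p) ≤ r)
    (hstep : ∀ p : ℕ, ∀ t : Fin m → ℝ, l0 t ≤ r →
      l2enorm (s p + Hᵀ *ᵥ ((H * Hᵀ)⁻¹ *ᵥ (y - H *ᵥ s p)) - s (p + 1)) ≤
      l2enorm (s p + Hᵀ *ᵥ ((H * Hᵀ)⁻¹ *ᵥ (y - H *ᵥ s p)) - t))
    (sstar : Fin m → ℝ) (hlim : Filter.Tendsto s Filter.atTop (nhds sstar)) :
    l2enorm (sstar - srd) ≤
      2 * (l2enorm (sd - srd) + l2enorm (Hᵀ *ᵥ ((H * Hᵀ)⁻¹ *ᵥ n))) /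
        (Real.sqrt (minSSQ H (2 * r)) - Real.sqrt (1 - minSSQ H (2 * r))) :=
  ecme_near_optimal_recovery_general H hrank r sd n y hy srd hsrd hssq s hs hstep sstar hlim
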